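/- Fix γ > 1. Under the product measure P_γ on graphs over V_N = {0,...,N-1} where each non-ground edge e is present independently with probability exp(−|e|^γ) and all ground edges are present, there exists C < ∞ (depending only on γ) such that for every α ∈ (0,1) and all sufficiently large N: P_γ[ℋ_∞(𝒢_N) ≤ N^α] ≥ exp(−C·N^{1+(1−α)(γ−1)}). -/

import Mathlib

open MeasureTheory ProbabilityTheory

/-- The Euclidean length of an edge of a graph on `Fin N`. -/
def elen {N : ℕ} (e : Sym2 (Fin N)) : ℕ :=
  Sym2.lift ⟨fun (x y : Fin N) => max (x : ℕ) (y : ℕ) - min (x : ℕ) (y : ℕ), fun a b => by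
    simp [Nat.max_comm, Nat.min_comm]⟩ e

lemma elen_mk {N : ℕ} (x y : Fin N) : elen s(x, y) = max (x : ℕ) (y : ℕ) - min (x : ℕ) (y : ℕ) := rfl

def vtx (N : ℕ) (hN : 0 < N) (a : ℕ) : Fin N := ⟨min a (N-1), by omega⟩

lemma vtx_val {N : ℕ} (hN : 0 < N) {a : ℕ} (h : a < N) : ((vtx N hN a : Fin N) : ℕ) = a := by
  simp only [vtx]; omega

def mkE (N : ℕ) (hN : 0 < N) (i k : ℕ) : Sym2 (Fin N) :=
  s(vtx N hN (k * 2^i), vtx N hN ((k+1) * 2^i))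

lemma elen_mkE_le (N : ℕ) (hN : 0 < N) (i k : ℕ) : elen (mkE N hN i k) ≤ 2^i := by
  have h : (k+1) * 2^i = k * 2^i + 2^i := by ring
  have hp : 0 < 2^i := Nat.pow_pos (by norm_num)
  simp only [mkE, elen_mk, vtx, h]
  generalize k * 2^i = a at *
  generalize 2^i = m at *
  omega

lemma elen_mkE (N : ℕ) (hN : 0 < N) {i k : ℕ} (h : (k+1) * 2^i < N) :
    elen (mkE N hN i k) = 2^i := by
  have h2 : (k+1) * 2^i = k * 2^i + 2^i := by ring
  have hp : 0 < 2^i := Nat.pow_pos (by norm_num)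
  rw [h2] at h
  simp only [mkE, elen_mk, vtx, h2]
  generalize k * 2^i = a at *
  generalize 2^i = m at *
  omega

lemma sum_image_le' {α β : Type*} [DecidableEq α] [DecidableEq β] (s : Finset α) (f : α → β) (g : β → ℝ)
    (hg : ∀ b, 0 ≤ g b) : ∑ b ∈ s.image f, g b ≤ ∑ a ∈ s, g (f a) := by
  induction s using Finset.induction with
  | empty => simp
  | @insert a s ha ih =>
      rw [Finset.image_insert, Finset.sum_insert ha]
      by_cases h : f a ∈ s.image f
      · rw [Finset.insert_eq_self.mpr h]
        exact le_add_of_nonneg_of_le (hg _) ih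
      · rw [Finset.sum_insert h]
        exact add_le_add le_rfl ih

lemma conn_of_ground {N : ℕ} (hN : 0 < N) (G : SimpleGraph (Fin N))
    (hg : ∀ x y : Fin N, (x : ℕ) + 1 = (y : ℕ) → G.Adj x y) : G.Connected := by
  have h0 : ∀ n : ℕ, ∀ h : n < N, G.Reachable ⟨0, hN⟩ ⟨n, h⟩ := by
    intro n
    induction n with
    | zero => intro h; exact SimpleGraph.Reachable.refl _
    | succ m ih =>
        intro h
        exact (ih (by omega)).trans (SimpleGraph.Adj.reachable
          (hg ⟨m, by omega⟩ ⟨m+1, h⟩ rfl))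
  haveI : Nonempty (Fin N) := ⟨⟨0, hN⟩⟩
  refine ⟨fun u v => ?_⟩
  obtain ⟨a, ha⟩ := u; obtain ⟨b, hb⟩ := v
  exact (h0 a ha).symm.trans (h0 b hb)

lemma dist_bound {N : ℕ} (hN : 0 < N) (t : ℕ) (G : SimpleGraph (Fin N))
    (hg : ∀ x y : Fin N, (x : ℕ) + 1 = (y : ℕ) → G.Adj x y)
    (hl : ∀ i k : ℕ, 1 ≤ i → i ≤ t → (k+1) * 2^i < N →
      G.Adj (vtx N hN (k * 2^i)) (vtx N hN ((k+1) * 2^i)))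
    (x y : Fin N) : G.dist x y ≤ 2 * t + (N-1) / 2^t := by
  have hconn := conn_of_ground hN G hg
  -- adjacency at any scale i ≤ t from a multiple of 2^i
  have hadj : ∀ i, i ≤ t → ∀ a : ℕ, 2^i ∣ a → a + 2^i < N →
      G.Adj (vtx N hN a) (vtx N hN (a + 2^i)) := by
    intro i hi a hdvd h
    rcases Nat.eq_zero_or_pos i with rfl | hipos
    · simp only [pow_zero] at h ⊢
      apply hg
      rw [vtx_val hN (by omega), vtx_val hN (by omega)]
    · obtain ⟨k, rfl⟩ := hdvd
      have h1 : 2^i * k = k * 2^i := by ring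
      have h2 : 2^i * k + 2^i = (k+1) * 2^i := by ring
      rw [h2, h1]
      exact hl i k hipos hi (by omega)
  have hdist1 : ∀ {u v : Fin N}, G.Adj u v → G.dist u v ≤ 1 :=
    fun h => le_of_eq (SimpleGraph.dist_eq_one_iff_adj.mpr h)
  -- Claim A : moving along level-i edges
  have hA : ∀ i, i ≤ t → ∀ k m : ℕ, (k+m) * 2^i < N →
      G.dist (vtx N hN (k * 2^i)) (vtx N hN ((k+m) * 2^i)) ≤ m := by
    intro i hi k m
    induction m with
    | zero => intro _; simp [SimpleGraph.dist_self]
    | succ m ih =>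
        intro h
        rw [show k + (m+1) = k + m + 1 from by omega] at h
        have hle : (k+m) * 2^i ≤ (k+m+1) * 2^i :=
          Nat.mul_le_mul_right _ (by omega)
        have h2 : (k+m) * 2^i + 2^i = (k+m+1) * 2^i := by ring
        have h1 : (k+m) * 2^i < N := by omega
        have hadjm : G.Adj (vtx N hN ((k+m) * 2^i)) (vtx N hN ((k+m+1) * 2^i)) := by
          rw [← h2]
          exact hadj i hi _ ⟨k+m, by ring⟩ (by omega)
        calc G.dist (vtx N hN (k * 2^i)) (vtx N hN ((k+m+1) * 2^i))
            ≤ G.dist (vtx N hN (k * 2^i)) (vtx N hN ((k+m) * 2^i)) +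
              G.dist (vtx N hN ((k+m) * 2^i)) (vtx N hN ((k+m+1) * 2^i)) :=
              hconn.dist_triangle
          _ ≤ m + 1 := add_le_add (ih h1) (hdist1 hadjm)
  -- Claim B : reaching the nearest multiple of 2^i below
  have hB : ∀ i, i ≤ t → ∀ a : ℕ, a < N →
      G.dist (vtx N hN a) (vtx N hN (2^i * (a / 2^i))) ≤ i := by
    intro i
    induction i with
    | zero => intro _ a ha; simp [SimpleGraph.dist_self]
    | succ i ih =>
        intro hi a ha
        have h1 := ih (by omega) a ha
        have hq : a / 2^(i+1) = (a / 2^i) / 2 := by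
          rw [pow_succ, ← Nat.div_div_eq_div_mul]
        have hba : 2^i * (a / 2^i) ≤ a := Nat.mul_div_le a (2^i)
        rcases Nat.even_or_odd (a / 2^i) with he | ho
        · -- even: the two multiples coincide
          obtain ⟨c, hc⟩ := he
          have : 2^(i+1) * (a / 2^(i+1)) = 2^i * (a / 2^i) := by
            rw [hq, hc]
            have : (c + c) / 2 = c := by omega
            rw [this, pow_succ]
            ring
          rw [this]
          exact h1.trans (by omega)
        · obtain ⟨c, hc⟩ := ho
          have hc2 : 2^(i+1) * (a / 2^(i+1)) + 2^i = 2^i * (a / 2^i) := by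
            rw [hq, hc]
            have : (2*c + 1) / 2 = c := by omega
            rw [this, pow_succ]
            ring
          have hadjc : G.Adj (vtx N hN (2^(i+1) * (a / 2^(i+1))))
              (vtx N hN (2^i * (a / 2^i))) := by
            rw [← hc2]
            exact hadj i (by omega) _ ⟨2 * (a / 2^(i+1)), by rw [pow_succ]; ring⟩ (by omega)
          calc G.dist (vtx N hN a) (vtx N hN (2^(i+1) * (a / 2^(i+1))))
              ≤ G.dist (vtx N hN a) (vtx N hN (2^i * (a / 2^i))) +
                G.dist (vtx N hN (2^i * (a / 2^i))) (vtx N hN (2^(i+1) * (a / 2^(i+1)))) :=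
                hconn.dist_triangle
            _ ≤ i + 1 := by
                refine add_le_add h1 ?_
                rw [SimpleGraph.dist_comm]
                exact hdist1 hadjc
  -- assemble
  have key : ∀ a b : ℕ, ∀ (ha : a < N) (hb : b < N), a ≤ b →
      G.dist ⟨a, ha⟩ ⟨b, hb⟩ ≤ 2 * t + (N-1) / 2^t := by
    intro a b ha hb hab
    have hva : (⟨a, ha⟩ : Fin N) = vtx N hN a := by
      apply Fin.ext; rw [vtx_val hN ha]
    have hvb : (⟨b, hb⟩ : Fin N) = vtx N hN b := by
      apply Fin.ext; rw [vtx_val hN hb]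
    rw [hva, hvb]
    have hdiv : a / 2^t ≤ b / 2^t := Nat.div_le_div_right hab
    set ka := a / 2^t with hka
    set kb := b / 2^t with hkb
    have hAm : G.dist (vtx N hN (2^t * ka)) (vtx N hN (2^t * kb)) ≤ kb - ka := by
      have h1 : (ka + (kb - ka)) * 2^t = 2^t * kb := by
        have : ka + (kb - ka) = kb := by omega
        rw [this]; ring
      have h2 : ka * 2^t = 2^t * ka := by ring
      have := hA t le_rfl ka (kb - ka) (by
        rw [h1]
        exact lt_of_le_of_lt (Nat.mul_div_le b (2^t)) hb)
      rw [h2, h1] at this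
      exact this
    have hkbb : kb ≤ (N-1) / 2^t := by
      apply Nat.div_le_div_right; omega
    calc G.dist (vtx N hN a) (vtx N hN b)
        ≤ G.dist (vtx N hN a) (vtx N hN (2^t * ka)) +
          G.dist (vtx N hN (2^t * ka)) (vtx N hN b) := hconn.dist_triangle
      _ ≤ G.dist (vtx N hN a) (vtx N hN (2^t * ka)) +
          (G.dist (vtx N hN (2^t * ka)) (vtx N hN (2^t * kb)) +
           G.dist (vtx N hN (2^t * kb)) (vtx N hN b)) := by
          exact add_le_add le_rfl hconn.dist_triangle
      _ ≤ t + ((kb - ka) + t) := by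
          refine add_le_add (hB t le_rfl a ha) (add_le_add hAm ?_)
          rw [SimpleGraph.dist_comm]
          exact hB t le_rfl b hb
      _ ≤ t + ((N-1) / 2^t + t) := by
          have h5 : kb - ka ≤ kb := Nat.sub_le _ _
          exact add_le_add le_rfl (add_le_add (h5.trans hkbb) le_rfl)
      _ = 2 * t + (N-1) / 2^t := by omega
  obtain ⟨a, ha⟩ := x; obtain ⟨b, hb⟩ := y
  rcases le_total a b with h | h
  · exact key a b ha hb h
  · rw [SimpleGraph.dist_comm]
    exact key b a hb ha h

theorem stmt13 (γ : ℝ) (hγ : 1 < γ) :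
    ∃ C : ℝ, 0 < C ∧ ∀ α : ℝ, 0 < α → α < 1 →
      ∃ N₀ : ℕ, ∀ N ≥ N₀,
        ∀ (Ω : Type) [MeasurableSpace Ω] (P : Measure Ω) [IsProbabilityMeasure P]
          (G : Ω → SimpleGraph (Fin N)),
          (∀ ω (x y : Fin N), (x : ℕ) + 1 = (y : ℕ) → (G ω).Adj x y) →
          iIndepSet (fun e : {e : Sym2 (Fin N) // 1 < elen e} =>
            {ω | (e : Sym2 (Fin N)) ∈ (G ω).edgeSet}) P →
          (∀ e : Sym2 (Fin N), 1 < elen e →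
            P {ω | e ∈ (G ω).edgeSet} = ENNReal.ofReal (Real.exp (-(elen e : ℝ) ^ γ))) →
          ENNReal.ofReal (Real.exp (-C * (N : ℝ) ^ (1 + (1 - α) * (γ - 1))))
            ≤ P {ω | ∀ x y : Fin N, ((G ω).dist x y : ℝ) ≤ (N : ℝ) ^ α} := by
  classical
  have hγ0 : 0 < γ - 1 := by linarith
  set R : ℝ := (2:ℝ) ^ (γ - 1) with hR
  have hR1 : 1 < R := by
    rw [hR]
    exact (Real.one_lt_rpow_iff_of_pos (by norm_num)).mpr (Or.inl ⟨one_lt_two, hγ0⟩)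
  have hRpos : 0 < R := lt_trans one_pos hR1
  have h4pos : (0:ℝ) < (4:ℝ) ^ (γ - 1) := Real.rpow_pos_of_pos (by norm_num) _
  set C : ℝ := R * (4:ℝ) ^ (γ - 1) / (R - 1) with hC
  have hCpos : 0 < C := div_pos (mul_pos hRpos h4pos) (by linarith)
  refine ⟨C, hCpos, ?_⟩
  intro α hα hα1
  -- eventual logarithmic bound
  have hev : ∀ᶠ (x : ℝ) in Filter.atTop, 4 * Real.logb 2 x + 8 ≤ x ^ α := by
    have hlog2 : 0 < Real.log 2 := Real.log_pos one_lt_two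
    have h1 := Asymptotics.isLittleO_iff.mp (isLittleO_log_rpow_atTop hα)
      (show (0:ℝ) < Real.log 2 / 16 by positivity)
    have h2 : Filter.Tendsto (fun x : ℝ => x ^ α) Filter.atTop Filter.atTop :=
      tendsto_rpow_atTop hα
    filter_upwards [h1, h2.eventually_ge_atTop 16, Filter.eventually_ge_atTop (1:ℝ)]
      with x hx1 hx2 hx3
    have hlogpos : 0 ≤ Real.log x := Real.log_nonneg hx3
    have hxa : 0 ≤ x ^ α := Real.rpow_nonneg (by linarith) _
    rw [Real.norm_eq_abs, Real.norm_eq_abs, abs_of_nonneg hlogpos, abs_of_nonneg hxa] at hx1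
    have hlb : Real.logb 2 x ≤ x ^ α / 16 := by
      rw [Real.logb, div_le_iff₀ hlog2]
      calc Real.log x ≤ Real.log 2 / 16 * x ^ α := hx1
        _ = x ^ α / 16 * Real.log 2 := by ring
    linarith
  have hevN : ∀ᶠ (n : ℕ) in Filter.atTop, 4 * Real.logb 2 n + 8 ≤ (n:ℝ) ^ α :=
    tendsto_natCast_atTop_atTop.eventually hev
  obtain ⟨N₁, hN₁⟩ := Filter.eventually_atTop.mp hevN
  refine ⟨max N₁ 3, ?_⟩
  intro N hN Ω _ P _ G hground hindep hprob
  have hN3 : 3 ≤ N := le_trans (le_max_right _ _) hN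
  have hlogN := hN₁ N (le_trans (le_max_left _ _) hN)
  have hNpos : 0 < N := by omega
  have hNR : (0:ℝ) < N := by exact_mod_cast hNpos
  have hNR1 : (1:ℝ) ≤ N := by exact_mod_cast hNpos
  set L : ℝ := (1 - α) * Real.logb 2 (N:ℝ) with hLdef
  have hlogbN : 0 ≤ Real.logb 2 (N:ℝ) := Real.logb_nonneg one_lt_two hNR1
  have hL0 : 0 ≤ L := mul_nonneg (by linarith) hlogbN
  set t : ℕ := ⌈L⌉₊ + 1 with htdef
  have ht_le : (t:ℝ) ≤ L + 2 := by
    have := Nat.ceil_lt_add_one hL0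
    rw [htdef]; push_cast; linarith
  have ht_ge : L + 1 ≤ (t:ℝ) := by
    have := Nat.le_ceil L
    rw [htdef]; push_cast; linarith
  have h2L : (2:ℝ) ^ L = (N:ℝ) ^ (1 - α) := by
    rw [hLdef, mul_comm, Real.rpow_mul (by norm_num : (0:ℝ) ≤ 2),
      Real.rpow_logb (by norm_num) (by norm_num) hNR]
  have h2t_hi : (2:ℝ) ^ (t:ℕ) ≤ 4 * (N:ℝ) ^ (1 - α) := by
    rw [← Real.rpow_natCast 2 t]
    calc (2:ℝ) ^ ((t:ℕ):ℝ) ≤ (2:ℝ) ^ (L + 2) :=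
          (Real.rpow_le_rpow_left_iff one_lt_two).mpr ht_le
      _ = (2:ℝ) ^ L * (2:ℝ) ^ (2:ℝ) := Real.rpow_add (by norm_num) _ _
      _ = 4 * (N:ℝ) ^ (1 - α) := by
          rw [h2L, show ((2:ℝ):ℝ) = ((2:ℕ):ℝ) by norm_num, Real.rpow_natCast]
          ring_nf
  have h2t_lo : 2 * (N:ℝ) ^ (1 - α) ≤ (2:ℝ) ^ (t:ℕ) := by
    rw [← Real.rpow_natCast 2 t]
    calc 2 * (N:ℝ) ^ (1 - α) = (2:ℝ) ^ L * (2:ℝ) ^ (1:ℝ) := by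
          rw [h2L, Real.rpow_one]; ring
      _ = (2:ℝ) ^ (L + 1) := (Real.rpow_add (by norm_num) _ _).symm
      _ ≤ (2:ℝ) ^ ((t:ℕ):ℝ) := (Real.rpow_le_rpow_left_iff one_lt_two).mpr ht_ge
  -- the family of forced edges
  set D : Finset ((_ : ℕ) × ℕ) :=
    (Finset.Icc 1 t).sigma (fun i => Finset.range (N / 2^i)) with hD
  set S : Finset {e : Sym2 (Fin N) // 1 < elen e} :=
    Finset.univ.filter
      (fun e => ∃ p ∈ D, (e : Sym2 (Fin N)) = mkE N hNpos p.1 p.2) with hS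
  -- the event that all forced edges are present implies small diameter
  have hsub : (⋂ e ∈ S, {ω | (e : Sym2 (Fin N)) ∈ (G ω).edgeSet}) ⊆
      {ω | ∀ x y : Fin N, ((G ω).dist x y : ℝ) ≤ (N:ℝ) ^ α} := by
    intro ω hω
    have hmem : ∀ e ∈ S, (e : Sym2 (Fin N)) ∈ (G ω).edgeSet := by
      intro e he
      exact Set.mem_iInter₂.mp hω e he
    intro x y
    have hl : ∀ i k : ℕ, 1 ≤ i → i ≤ t → (k+1) * 2^i < N →
        (G ω).Adj (vtx N hNpos (k * 2^i)) (vtx N hNpos ((k+1) * 2^i)) := by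
      intro i k h1 h2 h3
      have helen : 1 < elen (mkE N hNpos i k) := by
        rw [elen_mkE N hNpos h3]
        exact Nat.one_lt_two_pow_iff.mpr (by omega)
      have hp : (⟨i, k⟩ : (_ : ℕ) × ℕ) ∈ D := by
        rw [hD, Finset.mem_sigma]
        refine ⟨Finset.mem_Icc.mpr ⟨h1, h2⟩, Finset.mem_range.mpr ?_⟩
        show k < N / 2^i
        have hk1 : k + 1 ≤ N / 2^i :=
          (Nat.le_div_iff_mul_le (Nat.pow_pos (by norm_num))).mpr (le_of_lt h3)
        omega
      have hSmem : (⟨mkE N hNpos i k, helen⟩ : {e : Sym2 (Fin N) // 1 < elen e}) ∈ S := by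
        rw [hS, Finset.mem_filter]
        exact ⟨Finset.mem_univ _, ⟨⟨i, k⟩, hp, rfl⟩⟩
      have := hmem _ hSmem
      exact ((G ω).mem_edgeSet).mp this
    have hdist := dist_bound hNpos t (G ω) (hground ω) hl x y
    have hcast : ((G ω).dist x y : ℝ) ≤ 2 * (t:ℝ) + (((N-1) / 2^t : ℕ) : ℝ) := by
      exact_mod_cast hdist
    have hstep1 : (((N-1) / 2^t : ℕ) : ℝ) ≤ ((N:ℝ) - 1) / (2:ℝ) ^ (t:ℕ) := by
      calc (((N-1) / 2^t : ℕ) : ℝ) ≤ ((N-1 : ℕ) : ℝ) / ((2^t : ℕ) : ℝ) := Nat.cast_div_le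
        _ = ((N:ℝ) - 1) / (2:ℝ) ^ (t:ℕ) := by
            rw [Nat.cast_sub (by omega)]
            push_cast
            ring
    have hpow_pos : (0:ℝ) < 2 * (N:ℝ) ^ (1 - α) :=
      mul_pos (by norm_num) (Real.rpow_pos_of_pos hNR _)
    have hstep2 : ((N:ℝ) - 1) / (2:ℝ) ^ (t:ℕ) ≤ (N:ℝ) / (2 * (N:ℝ) ^ (1 - α)) := by
      apply div_le_div₀ (le_of_lt hNR) (by linarith) hpow_pos h2t_lo
    have hstep3 : (N:ℝ) / (2 * (N:ℝ) ^ (1 - α)) = (N:ℝ) ^ α / 2 := by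
      have hNe : (N:ℝ) ^ (1 - α) ≠ 0 := ne_of_gt (Real.rpow_pos_of_pos hNR _)
      have hNN : (N:ℝ) ^ α * (N:ℝ) ^ (1 - α) = (N:ℝ) := by
        rw [← Real.rpow_add hNR]
        norm_num
      rw [div_eq_div_iff (ne_of_gt hpow_pos) (by norm_num : (2:ℝ) ≠ 0)]
      linear_combination -2 * hNN
    have hstep4 : 2 * (t:ℝ) ≤ (N:ℝ) ^ α / 2 := by
      have h1 : (t:ℝ) ≤ Real.logb 2 (N:ℝ) + 2 := by
        have : L ≤ Real.logb 2 (N:ℝ) := by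
          rw [hLdef]
          nlinarith
        linarith
      linarith
    calc ((G ω).dist x y : ℝ) ≤ 2 * (t:ℝ) + (((N-1) / 2^t : ℕ) : ℝ) := hcast
      _ ≤ (N:ℝ) ^ α / 2 + (N:ℝ) ^ α / 2 := by
          have := hstep1.trans (hstep2.trans (le_of_eq hstep3))
          linarith
      _ = (N:ℝ) ^ α := by ring
  -- probability of the forced-edge event
  have hPE : P (⋂ e ∈ S, {ω | (e : Sym2 (Fin N)) ∈ (G ω).edgeSet}) =
      ENNReal.ofReal (Real.exp (-(∑ e ∈ S, ((elen (e : Sym2 (Fin N)) : ℝ)) ^ γ))) := by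
    rw [hindep.meas_biInter S]
    have hcongr : ∀ e ∈ S, P {ω | (e : Sym2 (Fin N)) ∈ (G ω).edgeSet} =
        ENNReal.ofReal (Real.exp (-((elen (e : Sym2 (Fin N)) : ℝ)) ^ γ)) :=
      fun e _ => hprob e e.2
    rw [Finset.prod_congr rfl hcongr,
      ← ENNReal.ofReal_prod_of_nonneg (fun _ _ => le_of_lt (Real.exp_pos _)),
      ← Real.exp_sum]
    congr 1
    rw [← Finset.sum_neg_distrib]
  -- the sum bound
  have hw0 : ∀ e : Sym2 (Fin N), (0:ℝ) ≤ ((elen e : ℝ)) ^ γ :=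
    fun e => Real.rpow_nonneg (Nat.cast_nonneg _) _
  have hsum : ∑ e ∈ S, ((elen (e : Sym2 (Fin N)) : ℝ)) ^ γ ≤
      C * (N:ℝ) ^ (1 + (1 - α) * (γ - 1)) := by
    have h1 : ∑ e ∈ S.image Subtype.val, ((elen e : ℝ)) ^ γ =
        ∑ e ∈ S, ((elen (e : Sym2 (Fin N)) : ℝ)) ^ γ :=
      Finset.sum_image (fun x _ y _ h => Subtype.ext h)
    have h2 : S.image Subtype.val ⊆ D.image (fun p => mkE N hNpos p.1 p.2) := by
      intro e he
      simp only [Finset.mem_image] at he ⊢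
      obtain ⟨e', he', rfl⟩ := he
      obtain ⟨p, hp, hpe⟩ := (Finset.mem_filter.mp (by rwa [hS] at he')).2
      exact ⟨p, hp, hpe.symm⟩
    have h3 : ∑ e ∈ S.image Subtype.val, ((elen e : ℝ)) ^ γ ≤
        ∑ e ∈ D.image (fun p => mkE N hNpos p.1 p.2), ((elen e : ℝ)) ^ γ :=
      Finset.sum_le_sum_of_subset_of_nonneg h2 (fun e _ _ => hw0 e)
    have h4 : ∑ e ∈ D.image (fun p => mkE N hNpos p.1 p.2), ((elen e : ℝ)) ^ γ ≤
        ∑ p ∈ D, ((elen (mkE N hNpos p.1 p.2) : ℝ)) ^ γ :=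
      sum_image_le' D _ _ hw0
    have h5 : ∑ p ∈ D, ((elen (mkE N hNpos p.1 p.2) : ℝ)) ^ γ =
        ∑ i ∈ Finset.Icc 1 t, ∑ k ∈ Finset.range (N / 2^i),
          ((elen (mkE N hNpos i k) : ℝ)) ^ γ := by
      rw [hD, Finset.sum_sigma]
    have h6 : ∀ i ∈ Finset.Icc 1 t, ∑ k ∈ Finset.range (N / 2^i),
        ((elen (mkE N hNpos i k) : ℝ)) ^ γ ≤ (N:ℝ) * R ^ i := by
      intro i _
      have hterm : ∀ k ∈ Finset.range (N / 2^i),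
          ((elen (mkE N hNpos i k) : ℝ)) ^ γ ≤ (((2:ℕ)^i : ℕ) : ℝ) ^ γ := fun k _ =>
        Real.rpow_le_rpow (Nat.cast_nonneg _)
          (Nat.cast_le.mpr (elen_mkE_le N hNpos i k)) (by linarith)
      calc ∑ k ∈ Finset.range (N / 2^i), ((elen (mkE N hNpos i k) : ℝ)) ^ γ
          ≤ ∑ _k ∈ Finset.range (N / 2^i), (((2:ℕ)^i : ℕ) : ℝ) ^ γ :=
            Finset.sum_le_sum hterm
        _ = ((N / 2^i : ℕ) : ℝ) * (((2:ℕ)^i : ℕ) : ℝ) ^ γ := by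
            rw [Finset.sum_const, Finset.card_range, nsmul_eq_mul]
        _ ≤ ((N:ℝ) / (2:ℝ)^i) * (((2:ℕ)^i : ℕ) : ℝ) ^ γ := by
            apply mul_le_mul_of_nonneg_right _ (Real.rpow_nonneg (Nat.cast_nonneg _) _)
            calc ((N / 2^i : ℕ) : ℝ) ≤ (N:ℝ) / (((2:ℕ)^i : ℕ) : ℝ) := Nat.cast_div_le
              _ = (N:ℝ) / (2:ℝ)^i := by push_cast; ring
        _ = (N:ℝ) * R ^ i := by
            have e0 : (((2:ℕ)^i : ℕ) : ℝ) = (2:ℝ) ^ (i:ℕ) := by push_cast; ring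
            have e1 : ((2:ℝ) ^ (i:ℕ)) ^ γ = (2:ℝ) ^ ((i:ℝ) * γ) := by
              rw [← Real.rpow_natCast 2 i, ← Real.rpow_mul (by norm_num)]
            have e2 : R ^ (i:ℕ) = (2:ℝ) ^ ((i:ℝ) * (γ - 1)) := by
              rw [hR, ← Real.rpow_natCast _ i, ← Real.rpow_mul (by norm_num), mul_comm (γ-1)]
            have e3 : (2:ℝ) ^ ((i:ℝ) * γ) = (2:ℝ) ^ (i:ℕ) * (2:ℝ) ^ ((i:ℝ) * (γ - 1)) := by
              rw [← Real.rpow_natCast 2 i, ← Real.rpow_add (by norm_num : (0:ℝ) < 2)]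
              ring_nf
            have hpow : (0:ℝ) < (2:ℝ) ^ (i:ℕ) := by positivity
            rw [e0, e1, e2, e3]
            field_simp
    have h7 : ∑ i ∈ Finset.Icc 1 t, (N:ℝ) * R ^ i ≤ (N:ℝ) * (R ^ (t+1) / (R - 1)) := by
      rw [← Finset.mul_sum]
      apply mul_le_mul_of_nonneg_left _ (Nat.cast_nonneg N)
      have hsub2 : Finset.Icc 1 t ⊆ Finset.range (t+1) := by
        intro i hi
        rw [Finset.mem_range]
        have := (Finset.mem_Icc.mp hi).2
        omega
      calc ∑ i ∈ Finset.Icc 1 t, R ^ i ≤ ∑ i ∈ Finset.range (t+1), R ^ i :=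
            Finset.sum_le_sum_of_subset_of_nonneg hsub2
              (fun _ _ _ => pow_nonneg hRpos.le _)
        _ = (R ^ (t+1) - 1) / (R - 1) := geom_sum_eq (ne_of_gt hR1) _
        _ ≤ R ^ (t+1) / (R - 1) := by
            apply (div_le_div_iff_of_pos_right (by linarith : (0:ℝ) < R - 1)).mpr
            linarith [pow_nonneg hRpos.le (t+1)]
    have h8 : R ^ (t+1) ≤ R * ((4:ℝ) ^ (γ-1) * (N:ℝ) ^ ((1-α) * (γ-1))) := by
      have e3 : R ^ (t:ℕ) = ((2:ℝ) ^ (t:ℕ)) ^ (γ - 1) := by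
        rw [hR, ← Real.rpow_natCast _ t, ← Real.rpow_mul (by norm_num),
          ← Real.rpow_natCast 2 t, ← Real.rpow_mul (by norm_num), mul_comm (γ-1)]
      have hRt : R ^ (t:ℕ) ≤ (4:ℝ) ^ (γ-1) * (N:ℝ) ^ ((1-α) * (γ-1)) := by
        rw [e3]
        calc ((2:ℝ) ^ (t:ℕ)) ^ (γ-1) ≤ (4 * (N:ℝ) ^ (1-α)) ^ (γ-1) :=
              Real.rpow_le_rpow (by positivity) h2t_hi (le_of_lt hγ0)
          _ = (4:ℝ) ^ (γ-1) * ((N:ℝ) ^ (1-α)) ^ (γ-1) :=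
              Real.mul_rpow (by norm_num) (by positivity)
          _ = (4:ℝ) ^ (γ-1) * (N:ℝ) ^ ((1-α) * (γ-1)) := by
              rw [← Real.rpow_mul (Nat.cast_nonneg N)]
      calc R ^ (t+1) = R ^ (t:ℕ) * R := pow_succ R t
        _ ≤ ((4:ℝ) ^ (γ-1) * (N:ℝ) ^ ((1-α) * (γ-1))) * R :=
            mul_le_mul_of_nonneg_right hRt hRpos.le
        _ = R * ((4:ℝ) ^ (γ-1) * (N:ℝ) ^ ((1-α) * (γ-1))) := by ring
    have hfinal : (N:ℝ) * (R ^ (t+1) / (R - 1)) ≤ C * (N:ℝ) ^ (1 + (1-α) * (γ-1)) := by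
      have hrw : (N:ℝ) ^ (1 + (1-α) * (γ-1)) = (N:ℝ) * (N:ℝ) ^ ((1-α) * (γ-1)) := by
        rw [Real.rpow_add hNR, Real.rpow_one]
      rw [hrw, hC]
      rw [div_mul_eq_mul_div, mul_comm (N:ℝ) (R ^ (t+1) / (R-1)), div_mul_eq_mul_div,
        div_le_div_iff₀ (by linarith) (by linarith)]
      have h9 : R ^ (t+1) * (N:ℝ) ≤ (R * ((4:ℝ) ^ (γ-1) * (N:ℝ) ^ ((1-α) * (γ-1)))) * (N:ℝ) :=
        mul_le_mul_of_nonneg_right h8 (le_of_lt hNR)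
      calc R ^ (t+1) * (N:ℝ) * (R - 1)
          ≤ (R * ((4:ℝ) ^ (γ-1) * (N:ℝ) ^ ((1-α) * (γ-1)))) * (N:ℝ) * (R - 1) :=
            mul_le_mul_of_nonneg_right h9 (by linarith)
        _ = R * (4:ℝ) ^ (γ-1) * ((N:ℝ) * (N:ℝ) ^ ((1-α) * (γ-1))) * (R - 1) := by ring
    calc ∑ e ∈ S, ((elen (e : Sym2 (Fin N)) : ℝ)) ^ γ
        = ∑ e ∈ S.image Subtype.val, ((elen e : ℝ)) ^ γ := h1.symm
      _ ≤ ∑ e ∈ D.image (fun p => mkE N hNpos p.1 p.2), ((elen e : ℝ)) ^ γ := h3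
      _ ≤ ∑ p ∈ D, ((elen (mkE N hNpos p.1 p.2) : ℝ)) ^ γ := h4
      _ = ∑ i ∈ Finset.Icc 1 t, ∑ k ∈ Finset.range (N / 2^i),
            ((elen (mkE N hNpos i k) : ℝ)) ^ γ := h5
      _ ≤ ∑ i ∈ Finset.Icc 1 t, (N:ℝ) * R ^ i := Finset.sum_le_sum h6
      _ ≤ (N:ℝ) * (R ^ (t+1) / (R - 1)) := h7
      _ ≤ C * (N:ℝ) ^ (1 + (1-α) * (γ-1)) := hfinal
  -- conclude
  refine le_trans ?_ (measure_mono hsub)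
  rw [hPE]
  apply ENNReal.ofReal_le_ofReal
  apply Real.exp_le_exp.mpr
  have : -C * (N:ℝ) ^ (1 + (1-α) * (γ-1)) = -(C * (N:ℝ) ^ (1 + (1-α) * (γ-1))) := by ring
  rw [this]
  exact neg_le_neg hsum
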